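/- Let G be a finite connected simple graph on n vertices with m edges, let L be its Laplacian matrix, and let L⁺ be a matrix satisfying the four Penrose equations for L. Let u ≠ v be vertices, let N > 0 be the number of spanning trees of G, and for adjacent a, b let N_{u,v}(a,b) be the number of spanning trees T of G in which the unique path from u to v in T traverses the edge {a,b} in the direction from a to b. Then for every path ⟨u = v₀, v₁, …, v_k = v⟩ in G, (1/N) · ∑_{i=0}^{k−1} ( N_{u,v}(v_i, v_{i+1}) − N_{u,v}(v_{i+1}, v_i) ) = (e_u − e_v)ᵀ L⁺ (e_u − e_v), i.e., the path sum of the spanning-tree flow equals the effective resistance R(u,v). -/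

import Mathlib

/-!
Call a spanning forest of `G` separating if it has exactly two components, one containing `u`
and the other `v`. Deleting the edge `{a, b}` from a spanning tree whose `u`–`v` path runs from
`a` to `b` leaves a separating forest with `a` on the side of `u` and `b` on the side of `v`, and
adding the edge back inverts this. Hence the flow `N_{u,v}(a, b) - N_{u,v}(b, a)` is the gradient
`φ a - φ b` of the potential `φ w` = number of separating forests with `w` on the side of `u`,
and its sum along any walk from `u` to `v` is `φ u - φ v`. The `u`–`v` path of a single tree has
net outflow `e_u - e_v`, so summing over the `N` spanning trees gives `L φ = N (e_u - e_v)`.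
Finally `(L z) ⬝ L⁺ (L z) = z ⬝ L z` for symmetric `L` as soon as `L L⁺ L = L`;
for `z = φ / N` this is `R(u, v) = (φ u - φ v) / N`.
-/

open SimpleGraph Matrix

variable {V : Type*}

def IsSpanningTreeOf (T G : SimpleGraph V) : Prop := T ≤ G ∧ T.IsTree

def PathTraverses (T : SimpleGraph V) (u v a b : V) : Prop :=
  ∃ p : T.Walk u v, p.IsPath ∧ ∃ d ∈ p.darts, d.toProd = (a, b)

def IsPenrosePseudoinverse {V : Type*} [Fintype V] [DecidableEq V]
    (L Lp : Matrix V V ℝ) : Prop :=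
  L * Lp * L = L ∧ Lp * L * Lp = Lp ∧ (L * Lp)ᵀ = L * Lp ∧ (Lp * L)ᵀ = Lp * L

namespace SimpleGraph

variable {G T Φ : SimpleGraph V} {u v a b w : V}

lemma Walk.sum_darts_sub {M : Type*} [AddCommGroup M] (f : V → M) (p : G.Walk u v) :
    (p.darts.map fun d => f d.toProd.1 - f d.toProd.2).sum = f u - f v := by
  induction p with
  | nil => simp
  | cons _ _ ih => simp [ih]

lemma Walk.sum_ite_mem_darts_sub {R : Type*} [CommRing R] [Fintype V] [DecidableEq V]
    (p : G.Walk u v) (hp : p.darts.Nodup) (w : V) :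
    ∑ b, ((if (w, b) ∈ p.darts.map Dart.toProd then 1 else 0) -
        (if (b, w) ∈ p.darts.map Dart.toProd then 1 else 0) : R) =
      (Pi.single u 1 - Pi.single v 1 : V → R) w := by
  induction p with
  | nil => simp
  | @cons x y z h q ih =>
    rw [Walk.darts_cons, List.nodup_cons] at hp
    have hnew : (x, y) ∉ q.darts.map Dart.toProd := fun hmem => hp.1 <| by
      obtain ⟨d, hd, hdxy⟩ := List.mem_map.mp hmem
      rwa [Dart.toProd_injective (a₂ := ⟨(x, y), h⟩) hdxy] at hd
    have hsplit : ∀ e : V × V,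
        (if e ∈ (Walk.cons h q).darts.map Dart.toProd then (1 : R) else 0) =
          (if e = (x, y) then 1 else 0) + if e ∈ q.darts.map Dart.toProd then 1 else 0 := by
      intro e
      by_cases he : e = (x, y)
      · subst he; simp [hnew]
      · simp [he]
    have hstep : ∑ b, ((if (w, b) = (x, y) then (1 : R) else 0) -
        if (b, w) = (x, y) then 1 else 0) = (if w = x then 1 else 0) - if w = y then 1 else 0 := by
      simp [Finset.sum_sub_distrib, ite_and]
    simp only [hsplit, add_sub_add_comm, Finset.sum_add_distrib, ih hp.2, hstep, Pi.sub_apply,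
      Pi.single_apply]
    ring

lemma reachable_deleteEdges_or_of_reachable (h : G.Reachable w a) :
    (G.deleteEdges {s(a, b)}).Reachable a w ∨ (G.deleteEdges {s(a, b)}).Reachable b w := by
  obtain ⟨p⟩ := h
  induction p with
  | nil => exact .inl (.refl _)
  | @cons w x a hwx _ ih =>
    by_cases he : s(w, x) = s(a, b)
    · rcases Sym2.eq_iff.mp he with ⟨rfl, -⟩ | ⟨rfl, -⟩
      · exact .inl .rfl
      · exact .inr .rfl
    · have hadj : (G.deleteEdges {s(a, b)}).Adj x w :=
        (deleteEdges_adj ..).mpr ⟨hwx.symm, by rwa [Set.mem_singleton_iff, Sym2.eq_swap]⟩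
      exact ih.imp (·.trans hadj.reachable) (·.trans hadj.reachable)

lemma deleteEdges_sup_edge (h : G.Adj a b) : G.deleteEdges {s(a, b)} ⊔ edge a b = G :=
  sdiff_sup_cancel ((edge_le_iff G).mpr (.inr h))

lemma sup_edge_deleteEdges (h : ¬G.Adj a b) : (G ⊔ edge a b).deleteEdges {s(a, b)} = G := by
  simp [h]

lemma IsAcyclic.not_reachable_deleteEdges (hG : G.IsAcyclic) (h : G.Adj a b) :
    ¬(G.deleteEdges {s(a, b)}).Reachable a b :=
  isBridge_iff.mp (isAcyclic_iff_forall_adj_isBridge.mp hG h)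

lemma IsAcyclic.pathTraverses_iff_mem_darts (hT : T.IsAcyclic) {p : T.Walk u v} (hp : p.IsPath) :
    PathTraverses T u v a b ↔ (a, b) ∈ p.darts.map Dart.toProd := by
  refine ⟨fun ⟨q, hq, d, hd, hdab⟩ => ?_, fun h => ⟨p, hp, List.mem_map.mp h⟩⟩
  obtain rfl : q = p :=
    congrArg Subtype.val ((hT.subsingleton_path u v).elim ⟨q, hq⟩ ⟨p, hp⟩)
  exact List.mem_map.mpr ⟨d, hd, hdab⟩

lemma _root_.PathTraverses.adj_and_reachable_deleteEdges (h : PathTraverses T u v a b) :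
    T.Adj a b ∧ (T.deleteEdges {s(a, b)}).Reachable u a ∧
      (T.deleteEdges {s(a, b)}).Reachable v b := by
  obtain ⟨p, hp, ⟨⟨a', b'⟩, hab⟩, hd, hdab⟩ := h
  obtain ⟨rfl, rfl⟩ := Prod.mk.inj hdab
  obtain ⟨pre, post, rfl⟩ := (Walk.isSubwalk_toWalk_iff_mem_darts _ hab).mpr hd
  have hnodup := hp.isTrail.edges_nodup
  simp only [Walk.edges_append, Walk.edges_cons, Walk.edges_nil, List.nodup_append,
    List.mem_append, List.mem_singleton] at hnodup
  exact ⟨hab, ⟨pre.toDeleteEdges _ fun e he hab => hnodup.1.2.2 e he e hab rfl⟩,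
    ⟨(post.toDeleteEdges _ fun e he hab => hnodup.2.2 e (.inr hab) e he rfl).reverse⟩⟩

lemma IsAcyclic.pathTraverses_iff_adj_and_reachable_deleteEdges (hT : T.IsAcyclic) :
    PathTraverses T u v a b ↔ T.Adj a b ∧ (T.deleteEdges {s(a, b)}).Reachable u a ∧
      (T.deleteEdges {s(a, b)}).Reachable v b := by
  refine ⟨PathTraverses.adj_and_reachable_deleteEdges, fun ⟨hab, hua, hvb⟩ => ?_⟩
  have hba := hT.not_reachable_deleteEdges hab
  obtain ⟨p, hp⟩ := ((hua.mono (T.deleteEdges_le _)).trans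
    (hab.reachable.trans (hvb.mono (T.deleteEdges_le _)).symm)).exists_isPath
  have hsep : ¬(T.deleteEdges {s(a, b)}).Reachable u v := fun huv =>
    hba (hua.symm.trans (huv.trans hvb))
  obtain ⟨d, hd, hdab⟩ := List.mem_map.mp (p.mem_edges_of_not_reachable_deleteEdges hsep)
  rcases dart_edge_eq_mk'_iff.mp hdab with hdab | hdba
  · exact ⟨p, hp, d, hd, hdab⟩
  · obtain ⟨-, hub, -⟩ := PathTraverses.adj_and_reachable_deleteEdges ⟨p, hp, d, hd, hdba⟩
    rw [Sym2.eq_swap] at hub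
    exact absurd (hua.symm.trans hub) hba

open scoped Classical in
lemma IsTree.sum_pathTraverses_sub {R : Type*} [CommRing R] [Fintype V] [DecidableEq V]
    (hT : T.IsTree) (w : V) :
    ∑ b, ((if PathTraverses T u v w b then 1 else 0) -
        (if PathTraverses T u v b w then 1 else 0) : R) =
      (Pi.single u 1 - Pi.single v 1 : V → R) w := by
  obtain ⟨p, hp, -⟩ := hT.existsUnique_path u v
  simp only [hT.isAcyclic.pathTraverses_iff_mem_darts hp]
  exact p.sum_ite_mem_darts_sub (Walk.darts_nodup_of_support_nodup hp.support_nodup) w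

structure IsSeparatingForestOf (Φ G : SimpleGraph V) (u v : V) : Prop where
  le : Φ ≤ G
  isAcyclic : Φ.IsAcyclic
  not_reachable : ¬Φ.Reachable u v
  reachable_or (w : V) : Φ.Reachable u w ∨ Φ.Reachable v w

lemma IsSeparatingForestOf.reachable_right_iff (hΦ : IsSeparatingForestOf Φ G u v) :
    Φ.Reachable v w ↔ ¬Φ.Reachable u w :=
  ⟨fun hv hu => hΦ.not_reachable (hu.trans hv.symm), (hΦ.reachable_or w).resolve_left⟩

lemma IsSeparatingForestOf.not_reachable_of_reachable (hΦ : IsSeparatingForestOf Φ G u v)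
    (hua : Φ.Reachable u a) (hvb : Φ.Reachable v b) : ¬Φ.Reachable a b :=
  fun hab => hΦ.not_reachable (hua.trans (hab.trans hvb.symm))

lemma _root_.IsSpanningTreeOf.isSeparatingForestOf_deleteEdges (hT : IsSpanningTreeOf T G)
    (h : PathTraverses T u v a b) : IsSeparatingForestOf (T.deleteEdges {s(a, b)}) G u v := by
  obtain ⟨hab, hua, hvb⟩ := h.adj_and_reachable_deleteEdges
  exact {
    le := (T.deleteEdges_le _).trans hT.1
    isAcyclic := hT.2.isAcyclic.anti (T.deleteEdges_le _)
    not_reachable := fun huv => hT.2.isAcyclic.not_reachable_deleteEdges hab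
      (hua.symm.trans (huv.trans hvb))
    reachable_or := fun w => (reachable_deleteEdges_or_of_reachable
      (hT.2.connected.preconnected w a)).imp hua.trans hvb.trans }

lemma IsSeparatingForestOf.isSpanningTreeOf_sup_edge (hΦ : IsSeparatingForestOf Φ G u v)
    (hab : G.Adj a b) (hua : Φ.Reachable u a) (hvb : Φ.Reachable v b) :
    IsSpanningTreeOf (Φ ⊔ edge a b) G ∧ PathTraverses (Φ ⊔ edge a b) u v a b := by
  have hnab := hΦ.not_reachable_of_reachable hua hvb
  have hdel : (Φ ⊔ edge a b).deleteEdges {s(a, b)} = Φ :=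
    sup_edge_deleteEdges fun h => hnab h.reachable
  have hacyc : (Φ ⊔ edge a b).IsAcyclic := hΦ.isAcyclic.sup_edge_of_not_reachable hnab
  have hadj : (Φ ⊔ edge a b).Adj a b := by simp [edge_adj, hab.ne]
  have hreach : ∀ w, (Φ ⊔ edge a b).Reachable u w := fun w =>
    (hΦ.reachable_or w).elim (·.mono le_sup_left) fun hvw =>
      (hua.mono le_sup_left).trans (hadj.reachable.trans ((hvb.symm.trans hvw).mono le_sup_left))
  refine ⟨⟨sup_le hΦ.le ((edge_le_iff G).mpr (.inr hab)),
    (connected_iff_exists_forall_reachable _).mpr ⟨u, hreach⟩, hacyc⟩, ?_⟩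
  rw [hacyc.pathTraverses_iff_adj_and_reachable_deleteEdges, hdel]
  exact ⟨hadj, hua, hvb⟩

section Counting

open scoped Classical
open Finset

variable [Fintype V]

noncomputable def forestPotential (G : SimpleGraph V) (u v w : V) : ℝ :=
  #{Φ | IsSeparatingForestOf Φ G u v ∧ Φ.Reachable u w}

noncomputable def spanningTreeFlow (G : SimpleGraph V) (u v a b : V) : ℝ :=
  {T | IsSpanningTreeOf T G ∧ PathTraverses T u v a b}.ncard -
    {T | IsSpanningTreeOf T G ∧ PathTraverses T u v b a}.ncard

lemma card_pathTraverses_eq_card_isSeparatingForestOf (hab : G.Adj a b) :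
    #{T | IsSpanningTreeOf T G ∧ PathTraverses T u v a b} =
      #{Φ | IsSeparatingForestOf Φ G u v ∧ Φ.Reachable u a ∧ Φ.Reachable v b} := by
  refine card_nbij' (·.deleteEdges {s(a, b)}) (· ⊔ edge a b) ?_ ?_ ?_ ?_
  · intro T hT
    simp only [mem_coe, mem_filter_univ] at hT ⊢
    obtain ⟨-, hua, hvb⟩ := hT.2.adj_and_reachable_deleteEdges
    exact ⟨hT.1.isSeparatingForestOf_deleteEdges hT.2, hua, hvb⟩
  · intro Φ hΦ
    simp only [mem_coe, mem_filter_univ] at hΦ ⊢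
    exact hΦ.1.isSpanningTreeOf_sup_edge hab hΦ.2.1 hΦ.2.2
  · intro T hT
    simp only [mem_coe, mem_filter_univ] at hT
    exact deleteEdges_sup_edge hT.2.adj_and_reachable_deleteEdges.1
  · intro Φ hΦ
    simp only [mem_coe, mem_filter_univ] at hΦ
    exact sup_edge_deleteEdges fun h => hΦ.1.not_reachable_of_reachable hΦ.2.1 hΦ.2.2 h.reachable

lemma spanningTreeFlow_eq_sub (hab : G.Adj a b) :
    spanningTreeFlow G u v a b = forestPotential G u v a - forestPotential G u v b := by
  simp only [spanningTreeFlow, Set.ncard_eq_toFinset_card', Set.toFinset_ofPred]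
  rw [card_pathTraverses_eq_card_isSeparatingForestOf hab,
    card_pathTraverses_eq_card_isSeparatingForestOf hab.symm, forestPotential, forestPotential]
  simp only [natCast_card_filter, ← sum_sub_distrib]
  refine sum_congr rfl fun Φ _ => ?_
  by_cases hΦ : IsSeparatingForestOf Φ G u v
  · simp only [hΦ.reachable_right_iff]
    by_cases hua : Φ.Reachable u a <;> by_cases hub : Φ.Reachable u b <;> simp [hΦ, hua, hub]
  · simp [hΦ]

lemma spanningTreeFlow_of_not_adj (hab : ¬G.Adj a b) : spanningTreeFlow G u v a b = 0 := by
  have hempty : ∀ x y, ¬G.Adj x y →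
      {T | IsSpanningTreeOf T G ∧ PathTraverses T u v x y}.ncard = 0 :=
    fun x y hxy => (Set.ncard_eq_zero (Set.toFinite _)).mpr <|
      Set.eq_empty_of_forall_notMem fun T ⟨hT, hp⟩ =>
        hxy (hT.1 hp.adj_and_reachable_deleteEdges.1)
  simp [spanningTreeFlow, hempty a b hab, hempty b a (hab ∘ G.adj_symm)]

lemma sum_spanningTreeFlow [DecidableEq V] (w : V) :
    ∑ b, spanningTreeFlow G u v w b =
      {T | IsSpanningTreeOf T G}.ncard * (Pi.single u 1 - Pi.single v 1 : V → ℝ) w := by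
  simp only [spanningTreeFlow, Set.ncard_eq_toFinset_card', Set.toFinset_ofPred, ← filter_filter]
  simp only [natCast_card_filter _ {T | IsSpanningTreeOf T G}, ← sum_sub_distrib]
  rw [sum_comm, ← nsmul_eq_mul, ← sum_const]
  exact sum_congr rfl fun T hT => (mem_filter.mp hT).2.2.sum_pathTraverses_sub w

lemma lapMatrix_mulVec_forestPotential [DecidableEq V] [DecidableRel G.Adj] :
    G.lapMatrix ℝ *ᵥ forestPotential G u v =
      ({T | IsSpanningTreeOf T G}.ncard : ℝ) • (Pi.single u 1 - Pi.single v 1) := by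
  ext w
  rw [lapMatrix_mulVec_apply, Pi.smul_apply, smul_eq_mul, ← sum_spanningTreeFlow]
  calc (G.degree w : ℝ) * forestPotential G u v w -
        ∑ b ∈ G.neighborFinset w, forestPotential G u v b
      = ∑ b ∈ G.neighborFinset w, (forestPotential G u v w - forestPotential G u v b) := by
        rw [sum_sub_distrib, sum_const, card_neighborFinset_eq_degree, nsmul_eq_mul]
    _ = ∑ b ∈ G.neighborFinset w, spanningTreeFlow G u v w b :=
        sum_congr rfl fun b hb => (spanningTreeFlow_eq_sub ((mem_neighborFinset ..).mp hb)).symm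
    _ = ∑ b, spanningTreeFlow G u v w b :=
        sum_subset (subset_univ _) fun b _ hb => spanningTreeFlow_of_not_adj (by simpa using hb)

lemma Walk.sum_spanningTreeFlow {x y : V} (p : G.Walk x y) :
    (p.darts.map fun d => spanningTreeFlow G u v d.toProd.1 d.toProd.2).sum =
      forestPotential G u v x - forestPotential G u v y := by
  rw [← p.sum_darts_sub]
  exact congrArg List.sum (List.map_congr_left fun d _ => spanningTreeFlow_eq_sub d.adj)

end Counting

end SimpleGraph

theorem Matrix.IsSymm.dotProduct_mulVec_of_mul_mul_eq {n R : Type*} [Fintype n] [CommSemiring R]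
    {L Lp : Matrix n n R} (hL : L.IsSymm) (h : L * Lp * L = L) (z : n → R) :
    (L *ᵥ z) ⬝ᵥ (Lp *ᵥ (L *ᵥ z)) = z ⬝ᵥ (L *ᵥ z) := by
  calc (L *ᵥ z) ⬝ᵥ (Lp *ᵥ (L *ᵥ z)) = z ⬝ᵥ (L *ᵥ (Lp *ᵥ (L *ᵥ z))) := by
        rw [dotProduct_mulVec z, ← mulVec_transpose, hL.eq]
    _ = z ⬝ᵥ (L *ᵥ z) := by rw [mulVec_mulVec, mulVec_mulVec, h]

theorem path_sum_of_spanning_tree_flow_eq_effective_resistance_general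
    [Fintype V] [DecidableEq V]
    (G : SimpleGraph V) [DecidableRel G.Adj]
    (Lp : Matrix V V ℝ)
    (hpenrose : IsPenrosePseudoinverse (G.lapMatrix ℝ) Lp)
    (u v : V)
    (N : ℕ) (hN : N = Set.ncard {T : SimpleGraph V | IsSpanningTreeOf T G})
    (hNpos : 0 < N)
    (Nuv : V → V → ℕ)
    (hNuv : ∀ a b, Nuv a b =
      Set.ncard {T : SimpleGraph V | IsSpanningTreeOf T G ∧ PathTraverses T u v a b}) :
    ∀ p : G.Walk u v, p.IsPath →
      (1 / (N : ℝ)) *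
          (p.darts.map (fun d => ((Nuv d.toProd.1 d.toProd.2 : ℝ) -
            (Nuv d.toProd.2 d.toProd.1 : ℝ)))).sum =
        (Pi.single u 1 - Pi.single v 1) ⬝ᵥ
          Lp.mulVec (Pi.single u 1 - Pi.single v 1) := by
  intro p _
  have hflow : ∀ a b, (Nuv a b : ℝ) - Nuv b a = spanningTreeFlow G u v a b := fun a b => by
    rw [hNuv, hNuv, spanningTreeFlow]
  set z : V → ℝ := (N : ℝ)⁻¹ • forestPotential G u v
  have hz : G.lapMatrix ℝ *ᵥ z = Pi.single u 1 - Pi.single v 1 := by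
    rw [mulVec_smul, lapMatrix_mulVec_forestPotential, ← hN, smul_smul,
      inv_mul_cancel₀ (Nat.cast_pos.mpr hNpos).ne', one_smul]
  simp only [hflow, Walk.sum_spanningTreeFlow]
  rw [← hz, (G.isSymm_lapMatrix (R := ℝ)).dotProduct_mulVec_of_mul_mul_eq hpenrose.1, hz]
  simp [z, dotProduct_sub]
  ring

theorem path_sum_of_spanning_tree_flow_eq_effective_resistance
    [Fintype V] [DecidableEq V]
    (G : SimpleGraph V) [DecidableRel G.Adj] (hG : G.Connected)
    (Lp : Matrix V V ℝ)
    (hpenrose : IsPenrosePseudoinverse (G.lapMatrix ℝ) Lp)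
    (u v : V) (huv : u ≠ v)
    (N : ℕ) (hN : N = Set.ncard {T : SimpleGraph V | IsSpanningTreeOf T G})
    (hNpos : 0 < N)
    (Nuv : V → V → ℕ)
    (hNuv : ∀ a b, Nuv a b =
      Set.ncard {T : SimpleGraph V | IsSpanningTreeOf T G ∧ PathTraverses T u v a b}) :
    ∀ p : G.Walk u v, p.IsPath →
      (1 / (N : ℝ)) *
          (p.darts.map (fun d => ((Nuv d.toProd.1 d.toProd.2 : ℝ) -
            (Nuv d.toProd.2 d.toProd.1 : ℝ)))).sum =
        (Pi.single u 1 - Pi.single v 1) ⬝ᵥ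
          Lp.mulVec (Pi.single u 1 - Pi.single v 1) :=
  path_sum_of_spanning_tree_flow_eq_effective_resistance_general G Lp hpenrose u v N hN hNpos Nuv
    hNuv
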